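/- arXiv:2303.04762 — 3 statements merged into one kernel-verified Lean document; each statement's English description precedes it below -/
import Mathlib

section
/- In the integral sum graph G_{r,s} on vertex set {r,...,0,...,s} with r < 0 < s and n = |r|+s+1 vertices, a negative vertex labeled -i (so i > 0) satisfies: deg(-i) = n - i - 1 if 1 ≤ i ≤ ⌊|r|/2⌋, and deg(-i) = n - i if ⌊|r|/2⌋ < i ≤ |r|. -/
/-- The integral sum graph on vertex set `{r, ..., s} ⊆ ℤ`:
distinct `u, v` are adjacent iff `u + v` also lies in `{r, ..., s}`. -/
def intervalSumGraph (r s : ℤ) : SimpleGraph ℤ where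
  Adj u v := u ≠ v ∧ u ∈ Set.Icc r s ∧ v ∈ Set.Icc r s ∧ u + v ∈ Set.Icc r s
  symm := by
    constructor
    rintro u v ⟨h1, h2, h3, h4⟩
    exact ⟨h1.symm, h3, h2, by rwa [add_comm]⟩
  loopless := ⟨fun u h => h.1 rfl⟩

/-- The graph `H^{-i,s}_{m,j}`: obtained from the integral sum graph `G_{-i,s}`
by deleting the vertices `-m` and `j` and all edges whose endpoint labels sum
to `-m` or to `j`. -/
def HGraph (i s m j : ℤ) : SimpleGraph ℤ where
  Adj u v := u ≠ v ∧ u ∈ Set.Icc (-i) s ∧ v ∈ Set.Icc (-i) s ∧ u + v ∈ Set.Icc (-i) s ∧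
    u ≠ -m ∧ v ≠ -m ∧ u ≠ j ∧ v ≠ j ∧ u + v ≠ -m ∧ u + v ≠ j
  symm := by
    constructor
    rintro u v ⟨h1, h2, h3, h4, h5, h6, h7, h8, h9, h10⟩
    exact ⟨h1.symm, h3, h2, by rwa [add_comm], h6, h5, h8, h7,
      by rwa [add_comm], by rwa [add_comm]⟩
  loopless := ⟨fun u h => h.1 rfl⟩

/-- The chromatic index of a graph: the least `n` such that there is a proper
edge coloring with `n` colors (distinct edges sharing a vertex get distinct colors). -/
noncomputable def chromaticIndex {V : Type*} (G : SimpleGraph V) : ℕ :=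
  sInf {n : ℕ | ∃ c : Sym2 V → Fin n,
    ∀ e ∈ G.edgeSet, ∀ f ∈ G.edgeSet, e ≠ f → (∃ v, v ∈ e ∧ v ∈ f) → c e ≠ c f}

/-- The sum of the two endpoint labels of an edge. -/
def edgeSum (e : Sym2 ℤ) : ℤ := Sym2.lift ⟨fun a b => a + b, fun a b => add_comm a b⟩ e

/-- The edge-sum chromatic number: the number of nonempty edge-sum color classes. -/
noncomputable def edgeSumChromatic (G : SimpleGraph ℤ) : ℕ :=
  {k : ℤ | ∃ e ∈ G.edgeSet, edgeSum e = k}.ncard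

/-! The neighbours of a vertex `a ≤ 0` of `G_{r,s}` are the labels of `[r - a, s]` other than `a`
itself. For `a = -i` that interval has `s + |r| + 1 - i` elements, and it contains `-i` exactly
when `2 i ≤ |r|`. -/

theorem intervalSumGraph_neighborSet_of_nonpos {r s a : ℤ} (hra : r ≤ a) (has : a ≤ s)
    (ha : a ≤ 0) :
    (intervalSumGraph r s).neighborSet a = ↑((Finset.Icc (r - a) s).erase a) := by
  ext v
  simp only [SimpleGraph.mem_neighborSet, intervalSumGraph, Set.mem_Icc, Finset.coe_erase,
    Finset.coe_Icc, Set.mem_sdiff, Set.mem_singleton_iff]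
  omega

theorem degree_neg (r s i : ℤ) (hr : r < 0) (hs : 0 < s) :
    (1 ≤ i → i ≤ |r| / 2 →
      (((intervalSumGraph r s).neighborSet (-i)).ncard : ℤ) = (|r| + s + 1) - i - 1) ∧
    (|r| / 2 < i → i ≤ |r| →
      (((intervalSumGraph r s).neighborSet (-i)).ncard : ℤ) = (|r| + s + 1) - i) := by
  rw [abs_of_neg hr]
  refine ⟨fun hi hir => ?_, fun hir hi => ?_⟩
  · have hmem : -i ∈ Finset.Icc (r - -i) s := Finset.mem_Icc.2 ⟨by omega, by omega⟩
    rw [intervalSumGraph_neighborSet_of_nonpos (by omega) (by omega) (by omega),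
      Set.ncard_coe_finset, Finset.card_erase_of_mem hmem, Int.card_Icc]
    omega
  · have hnmem : -i ∉ Finset.Icc (r - -i) s := by
      rw [Finset.mem_Icc]
      omega
    rw [intervalSumGraph_neighborSet_of_nonpos (by omega) (by omega) (by omega),
      Set.ncard_coe_finset, Finset.erase_eq_of_notMem hnmem, Int.card_Icc]
    omega
end

section
/- For every s with 3 ≤ s ≤ 6, the chromatic index of H^{-2,s}_{1,1} equals s. -/
/-!
Vertex `0` of `H^{-2,s}_{1,1}` is adjacent to `-2, 2, 3, …, s`, so at least `s` colours are
needed. Colouring every edge by the sum of its endpoints is proper, and since the sums `±1` are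
deleted the classes are `-2, 0, 2, …, s`, where class `-2` is the single edge `{-2, 0}` and
class `0` the single edge `{-2, 2}`. Moving `{0, s}` into class `0` (disjoint from `{-2, 2}` as
`s ≠ 2`) and then `{-2, 0}` into class `s` (which now avoids `0` and cannot reach `-2`) keeps
the colouring proper and leaves the `s` classes `0, 2, …, s`.
-/

namespace SimpleGraph

variable {V α : Type*} (G : SimpleGraph V)

def IsProperEdgeColoring (c : Sym2 V → α) : Prop :=
  ∀ e ∈ G.edgeSet, ∀ f ∈ G.edgeSet, e ≠ f → (∃ v, v ∈ e ∧ v ∈ f) → c e ≠ c f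

variable {G}

theorem IsProperEdgeColoring.update [DecidableEq V] {c : Sym2 V → α}
    (hc : G.IsProperEdgeColoring c) {e₀ : Sym2 V} {k : α}
    (hk : ∀ f ∈ G.edgeSet, f ≠ e₀ → (∃ v, v ∈ e₀ ∧ v ∈ f) → c f ≠ k) :
    G.IsProperEdgeColoring (Function.update c e₀ k) := by
  intro e he f hf hef hv
  by_cases he₀ : e = e₀
  · subst he₀
    simpa [Function.update_of_ne hef.symm] using (hk f hf hef.symm hv).symm
  by_cases hf₀ : f = e₀
  · subst hf₀
    obtain ⟨v, hve, hvf⟩ := hv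
    simpa [Function.update_of_ne hef] using hk e he hef ⟨v, hvf, hve⟩
  simpa [Function.update_of_ne he₀, Function.update_of_ne hf₀] using hc e he f hf hef hv

theorem IsProperEdgeColoring.exists_fin_of_mapsTo {c : Sym2 V → α}
    (hc : G.IsProperEdgeColoring c) {T : Finset α} (hT : T.Nonempty)
    (hcT : Set.MapsTo c G.edgeSet T) :
    ∃ c' : Sym2 V → Fin T.card, G.IsProperEdgeColoring c' := by
  classical
  obtain ⟨t₀, ht₀⟩ := hT
  refine ⟨fun e => T.equivFin (if h : c e ∈ T then ⟨c e, h⟩ else ⟨t₀, ht₀⟩), ?_⟩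
  intro e he f hf hef hv hcef
  have he' : c e ∈ T := hcT he
  have hf' : c f ∈ T := hcT hf
  simp only [he', hf', dite_true, EmbeddingLike.apply_eq_iff_eq, Subtype.mk.injEq] at hcef
  exact hc e he f hf hef hv hcef

theorem IsProperEdgeColoring.chromaticIndex_le {n : ℕ} {c : Sym2 V → Fin n}
    (hc : G.IsProperEdgeColoring c) :
    chromaticIndex G ≤ n :=
  Nat.sInf_le ⟨c, hc⟩

theorem IsProperEdgeColoring.card_le {n : ℕ} {c : Sym2 V → Fin n}
    (hc : G.IsProperEdgeColoring c) {v : V} {t : Finset V} (ht : ∀ u ∈ t, G.Adj v u) :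
    t.card ≤ n := by
  have hinj : Set.InjOn (fun u => c s(v, u)) t := by
    intro u hu w hw huw
    by_contra hne
    refine hc _ (ht u hu) _ (ht w hw) ?_ ⟨v, Sym2.mem_mk_left v u, Sym2.mem_mk_left v w⟩ huw
    exact fun h => hne (Sym2.congr_right.mp h)
  simpa using Finset.card_le_card_of_injOn _ (fun _ _ => Finset.mem_univ _) hinj

theorem IsProperEdgeColoring.card_le_chromaticIndex {n : ℕ} {c : Sym2 V → Fin n}
    (hc : G.IsProperEdgeColoring c) {v : V} {t : Finset V} (ht : ∀ u ∈ t, G.Adj v u) :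
    t.card ≤ chromaticIndex G := by
  obtain ⟨c', hc'⟩ : ∃ c' : Sym2 V → Fin (chromaticIndex G), G.IsProperEdgeColoring c' :=
    Nat.sInf_mem (s := {n | ∃ c : Sym2 V → Fin n, G.IsProperEdgeColoring c}) ⟨n, c, hc⟩
  exact hc'.card_le ht

end SimpleGraph

open SimpleGraph

theorem HGraph_adj {i s m j u v : ℤ} :
    (HGraph i s m j).Adj u v ↔ u ≠ v ∧ (-i ≤ u ∧ u ≤ s) ∧ (-i ≤ v ∧ v ≤ s) ∧
      (-i ≤ u + v ∧ u + v ≤ s) ∧ u ≠ -m ∧ v ≠ -m ∧ u ≠ j ∧ v ≠ j ∧ u + v ≠ -m ∧ u + v ≠ j := by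
  simp [HGraph, Set.mem_Icc]

theorem edgeSum_mk (a b : ℤ) : edgeSum s(a, b) = a + b := rfl

theorem isProperEdgeColoring_edgeSum (G : SimpleGraph ℤ) : G.IsProperEdgeColoring edgeSum := by
  rintro e - f - hef ⟨v, hve, hvf⟩
  obtain ⟨a, rfl⟩ := Sym2.mem_iff_exists.mp hve
  obtain ⟨b, rfl⟩ := Sym2.mem_iff_exists.mp hvf
  have hab : a ≠ b := fun h => hef (h ▸ rfl)
  simpa [edgeSum_mk] using hab

theorem card_insert_Icc_two {s : ℕ} (hs : 1 ≤ s) {a : ℤ} (ha : a < 2) :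
    (insert a (Finset.Icc 2 (s : ℤ))).card = s := by
  rw [Finset.card_insert_of_notMem (by simp; omega), Int.card_Icc]
  omega

def swapSumColoring (s : ℤ) : Sym2 ℤ → ℤ :=
  Function.update (Function.update edgeSum s(0, s) 0) s(-2, 0) s

theorem isProperEdgeColoring_swapSumColoring {s : ℤ} (hs : 3 ≤ s) :
    (HGraph 2 s 1 1).IsProperEdgeColoring (swapSumColoring s) := by
  refine ((isProperEdgeColoring_edgeSum _).update ?_).update ?_
  · rintro f hf - ⟨v, hv, hvf⟩
    obtain ⟨w, rfl⟩ := Sym2.mem_iff_exists.mp hvf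
    rw [mem_edgeSet, HGraph_adj] at hf
    rw [Sym2.mem_iff] at hv
    rw [edgeSum_mk]
    omega
  · rintro f hf hf₀ ⟨v, hv, hvf⟩
    obtain ⟨w, rfl⟩ := Sym2.mem_iff_exists.mp hvf
    rw [mem_edgeSet, HGraph_adj] at hf
    rw [Sym2.mem_iff] at hv
    by_cases h : s(v, w) = s(0, s)
    · rw [h, Function.update_self]
      omega
    · rw [Function.update_of_ne h, edgeSum_mk]
      rw [Sym2.eq_iff] at h
      omega

theorem mapsTo_swapSumColoring {s : ℤ} (hs : 3 ≤ s) :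
    Set.MapsTo (swapSumColoring s) (HGraph 2 s 1 1).edgeSet
      ((insert 0 (Finset.Icc 2 s) : Finset ℤ) : Set ℤ) := by
  intro e he
  induction e using Sym2.ind with | _ a b => ?_
  rw [mem_edgeSet, HGraph_adj] at he
  simp only [swapSumColoring, Finset.coe_insert, Finset.coe_Icc, Set.mem_insert_iff,
    Set.mem_Icc]
  by_cases h₁ : s(a, b) = s(-2, 0)
  · rw [h₁, Function.update_self]
    omega
  rw [Function.update_of_ne h₁]
  by_cases h₂ : s(a, b) = s(0, s)
  · rw [h₂, Function.update_self]
    exact Or.inl rfl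
  rw [Function.update_of_ne h₂, edgeSum_mk]
  rw [Sym2.eq_iff] at h₁
  omega

theorem HGraph_adj_zero {s : ℤ} (hs : 0 ≤ s) {u : ℤ}
    (hu : u ∈ insert (-2) (Finset.Icc 2 s)) :
    (HGraph 2 s 1 1).Adj 0 u := by
  simp only [Finset.mem_insert, Finset.mem_Icc] at hu
  rw [HGraph_adj]
  omega

theorem chromaticIndex_H_2_s_1_1_general (s : ℕ) (h3 : 3 ≤ s) :
    chromaticIndex (HGraph 2 (s : ℤ) 1 1) = s := by
  have hs : (3 : ℤ) ≤ s := by exact_mod_cast h3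
  obtain ⟨c, hc⟩ := (isProperEdgeColoring_swapSumColoring hs).exists_fin_of_mapsTo
    (Finset.insert_nonempty _ _) (mapsTo_swapSumColoring hs)
  have hcard {a : ℤ} (ha : a < 2) : (insert a (Finset.Icc 2 (s : ℤ))).card = s :=
    card_insert_Icc_two (by omega) ha
  apply le_antisymm
  · simpa [hcard] using hc.chromaticIndex_le
  · simpa [hcard] using hc.card_le_chromaticIndex (fun _ => HGraph_adj_zero (by omega))

theorem chromaticIndex_H_2_s_1_1 (s : ℕ) (h3 : 3 ≤ s) (h6 : s ≤ 6) :
    chromaticIndex (HGraph 2 (s : ℤ) 1 1) = s :=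
  chromaticIndex_H_2_s_1_1_general s h3
end

section
/- For all i ≥ 3 and m ∈ {1,2,3}, the chromatic index of H^{-i,2}_{m,1} equals i. -/
/-!
Vertex `0` is adjacent to each of the `i` vertices of `{-i, …, 2} \ {-m, 1, 0}`, so at least
`i` colors are needed. Coloring every edge by its sum is proper, but uses the `i + 1` sums
`-i, …, 0, 2` other than the excluded `-m`. The only edge of sum `2` is `{0, 2}`; it takes the
free color `-m`. The only edge of sum `0` is `{-2, 2}`; it takes `-1`, which appears at neither
`2` nor `-2` when `m ≠ 1`. For `m = 1` it takes `-i` instead, and the edge of sum `-i` at `-2`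
(if any, it is `{-2, 2 - i}`) moves to the color `-1`, unused since sum `-1` is excluded.
The colors are then `-i, …, -1`.
-/

section EdgeColoring

variable {V α : Type*} (G : SimpleGraph V)

def IsProperEdgeColoring (c : Sym2 V → α) : Prop :=
  ∀ e ∈ G.edgeSet, ∀ f ∈ G.edgeSet, e ≠ f → (∃ v, v ∈ e ∧ v ∈ f) → c e ≠ c f

variable {G}

lemma isProperEdgeColoring_of_adj {c : Sym2 V → α}
    (h : ∀ p q r, G.Adj p q → G.Adj p r → q ≠ r → c s(p, q) ≠ c s(p, r)) :
    IsProperEdgeColoring G c := by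
  intro e he f hf hef ⟨p, hpe, hpf⟩
  obtain ⟨q, rfl⟩ := (Sym2.mem_iff_exists.mp hpe)
  obtain ⟨r, rfl⟩ := (Sym2.mem_iff_exists.mp hpf)
  exact h p q r he hf fun hqr => hef (hqr ▸ rfl)

lemma IsProperEdgeColoring.card_le_of_adj [Fintype α] {c : Sym2 V → α}
    (hc : IsProperEdgeColoring G c) {v : V} {T : Finset V} (hT : ∀ w ∈ T, G.Adj v w) :
    T.card ≤ Fintype.card α := by
  refine Finset.card_le_card_of_injOn (fun w => c s(v, w)) (fun _ _ => Finset.mem_univ _) ?_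
  intro w hw w' hw' hcw
  by_contra hne
  exact hc _ (hT w hw) _ (hT w' hw') (mt Sym2.congr_right.mp hne) ⟨v, by simp, by simp⟩ hcw

lemma IsProperEdgeColoring.exists_fin_card [DecidableEq α] {c : Sym2 V → α}
    (hc : IsProperEdgeColoring G c) {S : Finset α} (hS : S.Nonempty)
    (hcS : ∀ e ∈ G.edgeSet, c e ∈ S) :
    ∃ c' : Sym2 V → Fin S.card, IsProperEdgeColoring G c' := by
  let toFin : α → Fin S.card := fun a =>
    if h : a ∈ S then S.equivFin ⟨a, h⟩ else ⟨0, hS.card_pos⟩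
  refine ⟨toFin ∘ c, fun e he f hf hef hshare hcef => hc e he f hf hef hshare ?_⟩
  simpa [toFin, hcS e he, hcS f hf] using hcef

lemma chromaticIndex_eq_of_adj {n : ℕ} {v : V} {T : Finset V} (hT : ∀ w ∈ T, G.Adj v w)
    (hTn : T.card = n) {c : Sym2 V → Fin n} (hc : IsProperEdgeColoring G c) :
    chromaticIndex G = n :=
  le_antisymm (Nat.sInf_le ⟨c, hc⟩)
    (le_csInf ⟨_, c, hc⟩ fun n ⟨c', hc'⟩ => by
      simpa [hTn] using IsProperEdgeColoring.card_le_of_adj (G := G) hc' hT)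

end EdgeColoring

section HGraph

lemma card_Icc_sdiff_neg_one_zero {i : ℕ} {m : ℤ} (hm : 1 ≤ m ∧ m ≤ i) :
    (Finset.Icc (-(i : ℤ)) 2 \ {-m, 1, 0}).card = i := by
  have hsub : ({-m, 1, 0} : Finset ℤ) ⊆ Finset.Icc (-(i : ℤ)) 2 := by
    intro x
    simp only [Finset.mem_insert, Finset.mem_singleton, Finset.mem_Icc]
    omega
  have hnotMem : -m ∉ ({1, 0} : Finset ℤ) := by
    simp only [Finset.mem_insert, Finset.mem_singleton, neg_eq_zero, not_or]
    omega
  rw [Finset.card_sdiff_of_subset hsub, Int.card_Icc, Finset.card_insert_of_notMem hnotMem,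
    Finset.card_pair (by norm_num)]
  omega

lemma HGraph_adj_iff {i m u v : ℤ} :
    (HGraph i 2 m 1).Adj u v ↔ u ≠ v ∧ (-i ≤ u ∧ u ≤ 2) ∧ (-i ≤ v ∧ v ≤ 2) ∧
      (-i ≤ u + v ∧ u + v ≤ 2) ∧ u ≠ -m ∧ v ≠ -m ∧ u ≠ 1 ∧ v ≠ 1 ∧ u + v ≠ -m ∧ u + v ≠ 1 := by
  simp only [HGraph, Set.mem_Icc]

lemma HGraph_adj_zero_s13 {i m v : ℤ} (hi : 0 ≤ i) (hm : 1 ≤ m)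
    (hv : v ∈ Finset.Icc (-i) 2 \ {-m, 1, 0}) :
    (HGraph i 2 m 1).Adj 0 v := by
  simp only [Finset.mem_sdiff, Finset.mem_Icc, Finset.mem_insert, Finset.mem_singleton] at hv
  rw [HGraph_adj_iff]
  omega

def sumEdgeColoring (i m : ℤ) (e : Sym2 ℤ) : ℤ :=
  if edgeSum e = 2 then -m
  else if edgeSum e = 0 then (if m = 1 then -i else -1)
  else if m = 1 ∧ edgeSum e = -i ∧ -2 ∈ e then -1
  else edgeSum e

lemma sumEdgeColoring_mk (i m u v : ℤ) :
    sumEdgeColoring i m s(u, v) =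
      if u + v = 2 then -m
      else if u + v = 0 then (if m = 1 then -i else -1)
      else if m = 1 ∧ u + v = -i ∧ (-2 = u ∨ -2 = v) then -1
      else u + v := by
  simp [sumEdgeColoring, edgeSum]

variable {i m : ℤ} (hi : 3 ≤ i) (hm : 1 ≤ m ∧ m ≤ 3)
include hi hm

lemma sumEdgeColoring_mem_Icc {e : Sym2 ℤ} (he : e ∈ (HGraph i 2 m 1).edgeSet) :
    sumEdgeColoring i m e ∈ Finset.Icc (-i) (-1) := by
  induction e using Sym2.ind with
  | h u v =>
    rw [SimpleGraph.mem_edgeSet, HGraph_adj_iff] at he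
    rw [sumEdgeColoring_mk, Finset.mem_Icc]
    split_ifs <;> omega

lemma isProperEdgeColoring_sumEdgeColoring :
    IsProperEdgeColoring (HGraph i 2 m 1) (sumEdgeColoring i m) := by
  refine isProperEdgeColoring_of_adj fun p q r hpq hpr hqr => ?_
  rw [HGraph_adj_iff] at hpq hpr
  rw [sumEdgeColoring_mk, sumEdgeColoring_mk]
  split_ifs <;> omega

end HGraph

theorem chromaticIndex_H_i_2_m_1 (i : ℕ) (hi : 3 ≤ i) (m : ℤ)
    (hm : m ∈ ({1, 2, 3} : Set ℤ)) :
    chromaticIndex (HGraph (i : ℤ) 2 m 1) = i := by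
  have hi' : (3 : ℤ) ≤ i := by exact_mod_cast hi
  have hm' : 1 ≤ m ∧ m ≤ 3 := by
    simp only [Set.mem_insert_iff, Set.mem_singleton_iff] at hm
    omega
  have hstar : ∀ v ∈ Finset.Icc (-(i : ℤ)) 2 \ {-m, 1, 0}, (HGraph (i : ℤ) 2 m 1).Adj 0 v :=
    fun _ => HGraph_adj_zero_s13 (by omega) hm'.1
  have hstar_card := card_Icc_sdiff_neg_one_zero (by omega : 1 ≤ m ∧ m ≤ i)
  have hpalette_card : (Finset.Icc (-(i : ℤ)) (-1)).card = i := by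
    rw [Int.card_Icc]; omega
  obtain ⟨c, hc⟩ := (isProperEdgeColoring_sumEdgeColoring hi' hm').exists_fin_card
    (Finset.nonempty_Icc.mpr (by omega)) fun _ => sumEdgeColoring_mem_Icc hi' hm'
  exact (chromaticIndex_eq_of_adj hstar (hstar_card.trans hpalette_card.symm) hc).trans
    hpalette_card
end
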